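/- Let I be an instance of SPA-ST and let J be the integer programming model of I. For every super-stable matching M in I there exists a feasible solution of J (an assignment of values in {0,1} to all the variables satisfying all twelve constraint families) in which x_{i,j} = 1 if and only if (s_i, p_j) ∈ M; in particular the objective value Σ_{acceptable (s_i,p_j)} x_{i,j} of this solution equals |M|. -/

import Mathlib

open scoped Classical

/-- An instance of the Student-Project Allocation problem with lecturer
preferences over students, with Ties (SPA-ST).  `sPref s p q` means student `s`
ranks project `p` at least as highly as project `q` (`p ⪰_s q`); `lPref k t t'`
means lecturer `k` ranks student `t` at least as highly as student `t'`. -/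
structure SPAST (S P L : Type) [Fintype S] [Fintype P] [Fintype L]
    [DecidableEq S] [DecidableEq P] [DecidableEq L] where
  /-- the lecturer offering each project -/
  lec : P → L
  /-- project capacities -/
  c : P → ℕ
  /-- lecturer capacities -/
  d : L → ℕ
  cpos : ∀ p : P, 0 < c p
  dpos : ∀ k : L, 0 < d k
  /-- the set of projects acceptable to each student -/
  acc : S → Finset P
  sPref : S → P → P → Prop
  lPref : L → S → S → Prop
  sRefl : ∀ s : S, ∀ p ∈ acc s, sPref s p p
  sTrans : ∀ s : S, ∀ p ∈ acc s, ∀ q ∈ acc s, ∀ r ∈ acc s,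
    sPref s p q → sPref s q r → sPref s p r
  sTotal : ∀ s : S, ∀ p ∈ acc s, ∀ q ∈ acc s, sPref s p q ∨ sPref s q p
  lRefl : ∀ k : L, ∀ t : S, (∃ p ∈ acc t, lec p = k) → lPref k t t
  lTrans : ∀ k : L, ∀ t1 t2 t3 : S,
    (∃ p ∈ acc t1, lec p = k) → (∃ p ∈ acc t2, lec p = k) → (∃ p ∈ acc t3, lec p = k) →
    lPref k t1 t2 → lPref k t2 t3 → lPref k t1 t3
  lTotal : ∀ k : L, ∀ t1 t2 : S,
    (∃ p ∈ acc t1, lec p = k) → (∃ p ∈ acc t2, lec p = k) →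
    lPref k t1 t2 ∨ lPref k t2 t1
  capLB : ∀ p : P, c p ≤ d (lec p)
  capUB : ∀ k : L, d k ≤ ∑ p ∈ Finset.univ.filter (fun p => lec p = k), c p

namespace SPAST

variable {S P L : Type} [Fintype S] [Fintype P] [Fintype L]
  [DecidableEq S] [DecidableEq P] [DecidableEq L]

/-- `M` is a matching: pairs are acceptable, each student is matched at most once,
and project and lecturer capacities are respected. -/
def IsMatching (I : SPAST S P L) (M : Finset (S × P)) : Prop :=
  (∀ x ∈ M, x.2 ∈ I.acc x.1) ∧
  (∀ s : S, ∀ p q : P, (s, p) ∈ M → (s, q) ∈ M → p = q) ∧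
  (∀ p : P, (M.filter (fun x => x.2 = p)).card ≤ I.c p) ∧
  (∀ k : L, (M.filter (fun x => I.lec x.2 = k)).card ≤ I.d k)

/-- The set `M(p)` of students assigned to project `p` in `M`. -/
def projAsg (M : Finset (S × P)) (p : P) : Finset S :=
  (M.filter (fun x => x.2 = p)).image Prod.fst

/-- The set `M(l_k)` of students assigned to lecturer `k` in `M`. -/
def lecAsg (I : SPAST S P L) (M : Finset (S × P)) (k : L) : Finset S :=
  (M.filter (fun x => I.lec x.2 = k)).image Prod.fst

/-- `t` is a least-preferred (worst) student of lecturer `k` in the set `T`. -/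
def WorstIn (I : SPAST S P L) (k : L) (T : Finset S) (t : S) : Prop :=
  t ∈ T ∧ ∀ t' ∈ T, I.lPref k t' t

/-- `(s, p)` is a super-blocking pair for `M`. -/
def SuperBlocking (I : SPAST S P L) (M : Finset (S × P)) (s : S) (p : P) : Prop :=
  p ∈ I.acc s ∧ (s, p) ∉ M ∧
  (∀ q : P, (s, q) ∈ M → ¬(I.sPref s q p ∧ ¬I.sPref s p q)) ∧
  (((projAsg M p).card < I.c p ∧ (lecAsg I M (I.lec p)).card < I.d (I.lec p)) ∨
   ((projAsg M p).card < I.c p ∧ (lecAsg I M (I.lec p)).card = I.d (I.lec p) ∧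
     (s ∈ lecAsg I M (I.lec p) ∨
      ∃ t : S, WorstIn I (I.lec p) (lecAsg I M (I.lec p)) t ∧ I.lPref (I.lec p) s t)) ∨
   ((projAsg M p).card = I.c p ∧
     ∃ t : S, WorstIn I (I.lec p) (projAsg M p) t ∧ I.lPref (I.lec p) s t))

/-- `(s, p)` is a weakly-blocking pair for `M`. -/
def WeakBlocking (I : SPAST S P L) (M : Finset (S × P)) (s : S) (p : P) : Prop :=
  p ∈ I.acc s ∧ (s, p) ∉ M ∧
  (∀ q : P, (s, q) ∈ M → I.sPref s p q ∧ ¬I.sPref s q p) ∧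
  (((projAsg M p).card < I.c p ∧ (lecAsg I M (I.lec p)).card < I.d (I.lec p)) ∨
   ((projAsg M p).card < I.c p ∧ (lecAsg I M (I.lec p)).card = I.d (I.lec p) ∧
     (s ∈ lecAsg I M (I.lec p) ∨
      ∃ t : S, WorstIn I (I.lec p) (lecAsg I M (I.lec p)) t ∧
        (I.lPref (I.lec p) s t ∧ ¬I.lPref (I.lec p) t s))) ∨
   ((projAsg M p).card = I.c p ∧
     ∃ t : S, WorstIn I (I.lec p) (projAsg M p) t ∧
       (I.lPref (I.lec p) s t ∧ ¬I.lPref (I.lec p) t s)))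

/-- `M` is a super-stable matching in `I`. -/
def SuperStable (I : SPAST S P L) (M : Finset (S × P)) : Prop :=
  I.IsMatching M ∧ ∀ (s : S) (p : P), ¬SuperBlocking I M s p

/-- `M` is a weakly stable matching in `I`. -/
def WeaklyStable (I : SPAST S P L) (M : Finset (S × P)) : Prop :=
  I.IsMatching M ∧ ∀ (s : S) (p : P), ¬WeakBlocking I M s p

/-- `I` is an SPA-S instance: all preference lists are strictly ordered
(the preorders are antisymmetric). -/
def StrictPrefs (I : SPAST S P L) : Prop :=
  (∀ s : S, ∀ p ∈ I.acc s, ∀ q ∈ I.acc s, I.sPref s p q → I.sPref s q p → p = q) ∧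
  (∀ k : L, ∀ t t' : S, (∃ p ∈ I.acc t, I.lec p = k) → (∃ p ∈ I.acc t', I.lec p = k) →
    I.lPref k t t' → I.lPref k t' t → t = t')

/-- `I'` is an SPA-S instance obtained from `I` by breaking the ties. -/
def TieBreaking (I I' : SPAST S P L) : Prop :=
  I'.lec = I.lec ∧ I'.c = I.c ∧ I'.d = I.d ∧ I'.acc = I.acc ∧
  StrictPrefs I' ∧
  (∀ (s : S) (p q : P), I.sPref s p q → ¬I.sPref s q p →
    I'.sPref s p q ∧ ¬I'.sPref s q p) ∧
  (∀ (k : L) (t t' : S), I.lPref k t t' → ¬I.lPref k t' t →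
    I'.lPref k t t' ∧ ¬I'.lPref k t' t)

end SPAST

namespace SPAST

variable {S P L : Type} [Fintype S] [Fintype P] [Fintype L]
  [DecidableEq S] [DecidableEq P] [DecidableEq L]

/-- The variables of the integer programming model `J` of an SPA-ST instance. -/
structure IPSol (S P L : Type) where
  x : S → P → ℤ
  alpha : P → ℤ
  beta : L → ℤ
  eta : L → ℤ
  delta : S → L → ℤ
  gamma : P → ℤ
  lam : S → P → ℤ

/-- a value in {0,1} -/
def Bin (v : ℤ) : Prop := v = 0 ∨ v = 1

/-- θ_{i,j} = 1 − x_{i,j} − Σ_{p' ∈ S_{i,j}} x_{i,p'}, where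
`S_{i,j}` is the set of projects `s` strictly prefers to `p`. -/
noncomputable def theta (I : SPAST S P L) (sol : IPSol S P L) (s : S) (p : P) : ℤ :=
  1 - sol.x s p -
    ∑ p' ∈ (I.acc s).filter (fun p' => I.sPref s p' p ∧ ¬I.sPref s p p'), sol.x s p'

/-- `sol` is a feasible solution of the IP model `J` of `I`: all variables take
values in {0,1} and the twelve constraint families hold. -/
def Feasible (I : SPAST S P L) (sol : IPSol S P L) : Prop :=
  -- binary variables
  (∀ (s : S) (p : P), Bin (sol.x s p)) ∧
  (∀ p : P, Bin (sol.alpha p)) ∧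
  (∀ k : L, Bin (sol.beta k)) ∧
  (∀ k : L, Bin (sol.eta k)) ∧
  (∀ (s : S) (k : L), Bin (sol.delta s k)) ∧
  (∀ p : P, Bin (sol.gamma p)) ∧
  (∀ (s : S), ∀ p ∈ I.acc s, Bin (sol.lam s p)) ∧
  -- x variables exist only for acceptable pairs
  (∀ (s : S) (p : P), p ∉ I.acc s → sol.x s p = 0) ∧
  -- (1)
  (∀ s : S, ∑ p ∈ I.acc s, sol.x s p ≤ 1) ∧
  -- (2)
  (∀ p : P, ∑ s : S, sol.x s p ≤ (I.c p : ℤ)) ∧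
  -- (3)
  (∀ k : L, ∑ s : S, ∑ p ∈ Finset.univ.filter (fun p => I.lec p = k), sol.x s p
    ≤ (I.d k : ℤ)) ∧
  -- (4)
  (∀ p : P, (I.c p : ℤ) * sol.alpha p ≥ (I.c p : ℤ) - ∑ s : S, sol.x s p) ∧
  -- (5)
  (∀ k : L, (I.d k : ℤ) * sol.beta k ≥
    (I.d k : ℤ) - ∑ s : S, ∑ p ∈ Finset.univ.filter (fun p => I.lec p = k), sol.x s p) ∧
  -- (6)
  (∀ (s : S), ∀ p ∈ I.acc s,
    theta I sol s p + sol.alpha p + sol.beta (I.lec p) ≤ 2) ∧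
  -- (7)
  (∀ k : L, (I.d k : ℤ) * sol.eta k ≥
    1 + (∑ s : S, ∑ p ∈ Finset.univ.filter (fun p => I.lec p = k), sol.x s p)
      - (I.d k : ℤ)) ∧
  -- (8)
  (∀ (s : S) (k : L), (I.d k : ℤ) * sol.delta s k ≥
    (∑ s' : S, ∑ p ∈ Finset.univ.filter (fun p => I.lec p = k), sol.x s' p) -
    ∑ s' ∈ Finset.univ.filter (fun s' : S =>
        (∃ q ∈ I.acc s', I.lec q = k) ∧ I.lPref k s' s ∧ ¬I.lPref k s s'),
      ∑ p ∈ Finset.univ.filter (fun p => I.lec p = k), sol.x s' p) ∧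
  -- (9)
  (∀ (s : S), ∀ p ∈ I.acc s,
    theta I sol s p + sol.alpha p + sol.eta (I.lec p) + sol.delta s (I.lec p) ≤ 3) ∧
  -- (10)
  (∀ p : P, (I.c p : ℤ) * sol.gamma p ≥ 1 + (∑ s : S, sol.x s p) - (I.c p : ℤ)) ∧
  -- (11)
  (∀ (s : S), ∀ p ∈ I.acc s, (I.c p : ℤ) * sol.lam s p ≥
    (∑ s' : S, sol.x s' p) -
    ∑ s' ∈ Finset.univ.filter (fun s' : S =>
        p ∈ I.acc s' ∧ I.lPref (I.lec p) s' s ∧ ¬I.lPref (I.lec p) s s'),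
      sol.x s' p) ∧
  -- (12)
  (∀ (s : S), ∀ p ∈ I.acc s,
    theta I sol s p + sol.gamma p + sol.lam s p ≤ 2)

/-- The matching `{(s_i, p_j) : x_{i,j} = 1}` derived from an IP solution. -/
def matchOf (sol : IPSol S P L) : Finset (S × P) :=
  Finset.univ.filter (fun y : S × P => sol.x y.1 y.2 = 1)

end SPAST

/-!
Take `x` to be the indicator of `M` and give every auxiliary variable the truth value of the
condition it is meant to detect: `α_j` / `γ_j` whether `p_j` is undersubscribed / full,
`β_k` / `η_k` the same for `l_k`, and `δ_{i,k}`, `λ_{i,j,k}` whether some student of `M(l_k)`,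
resp. `M(p_j)`, is not strictly preferred to `s_i`. The counting constraints then hold for any
matching. Moreover `θ_{i,j} ≤ 1`, and `θ_{i,j} > 0` only when `s_i` is unmatched or does not
strictly prefer `M(s_i)` to `p_j`; so (6), (9) and (12) can only fail when `θ_{i,j} = 1` and the
other variables are all `1`, which makes `(s_i, p_j)` super-blocking of type (i), (ii) and (iii)
respectively (for (ii) and (iii), `s_i` is then at least as good as a worst student of `M(l_k)`,
resp. `M(p_j)`).
-/
namespace SPAST

variable {S P L : Type} [DecidableEq S] [DecidableEq P] [DecidableEq L]

theorem mem_projAsg {M : Finset (S × P)} {p : P} {s : S} :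
    s ∈ projAsg M p ↔ (s, p) ∈ M := by
  simp [projAsg]

theorem sum_ite_mem_eq_card_projAsg [Fintype S] (M : Finset (S × P)) (p : P) :
    (∑ s : S, if (s, p) ∈ M then (1 : ℤ) else 0) = (projAsg M p).card := by
  rw [Finset.sum_boole]
  congr 2
  ext s
  simp [mem_projAsg]

variable [Fintype S] [Fintype P] [Fintype L]

def Ranks (I : SPAST S P L) (k : L) (t : S) : Prop :=
  ∃ p ∈ I.acc t, I.lec p = k

theorem exists_worstIn (I : SPAST S P L) (k : L) {T : Finset S} (hT : T.Nonempty)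
    (hrank : ∀ t ∈ T, I.Ranks k t) : ∃ w, I.WorstIn k T w := by
  induction hT using Finset.Nonempty.cons_induction with
  | singleton a =>
    exact ⟨a, Finset.mem_singleton_self a, fun t ht => by
      rw [Finset.mem_singleton.mp ht]; exact I.lRefl k a (hrank a (Finset.mem_singleton_self a))⟩
  | cons a T ha hT ih =>
    have hrankT : ∀ t ∈ T, I.Ranks k t := fun t ht => hrank t (Finset.mem_cons_of_mem ht)
    have hranka : I.Ranks k a := hrank a (Finset.mem_cons_self a T)
    obtain ⟨w, hwT, hw⟩ := ih hrankT
    rcases I.lTotal k a w hranka (hrankT w hwT) with haw | hwa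
    · refine ⟨w, Finset.mem_cons_of_mem hwT, fun t ht => ?_⟩
      rcases Finset.mem_cons.mp ht with rfl | ht
      exacts [haw, hw t ht]
    · refine ⟨a, Finset.mem_cons_self a T, fun t ht => ?_⟩
      rcases Finset.mem_cons.mp ht with rfl | ht
      exacts [I.lRefl k t hranka,
        I.lTrans k t w a (hrankT t ht) (hrankT w hwT) hranka (hw t ht) hwa]

theorem exists_worstIn_lPref (I : SPAST S P L) (k : L) {T : Finset S}
    (hrank : ∀ t ∈ T, I.Ranks k t) {s t : S} (hs : I.Ranks k s) (ht : t ∈ T)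
    (hts : ¬(I.lPref k t s ∧ ¬I.lPref k s t)) : ∃ w, I.WorstIn k T w ∧ I.lPref k s w := by
  obtain ⟨w, hwT, hw⟩ := I.exists_worstIn k ⟨t, ht⟩ hrank
  have hst : I.lPref k s t :=
    (I.lTotal k t s (hrank t ht) hs).elim (fun h => not_not.mp (not_and.mp hts h)) id
  exact ⟨w, ⟨hwT, hw⟩, I.lTrans k s t w hs (hrank t ht) (hrank w hwT) hst (hw t ht)⟩

section Assignment

variable {I : SPAST S P L} {M : Finset (S × P)}

theorem mem_lecAsg {k : L} {s : S} :
    s ∈ lecAsg I M k ↔ ∃ p, (s, p) ∈ M ∧ I.lec p = k := by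
  simp [lecAsg]

theorem ranks_of_mem_projAsg (hacc : ∀ x ∈ M, x.2 ∈ I.acc x.1) {p : P} {t : S}
    (ht : t ∈ projAsg M p) : I.Ranks (I.lec p) t :=
  ⟨p, hacc _ (mem_projAsg.mp ht), rfl⟩

theorem ranks_of_mem_lecAsg (hacc : ∀ x ∈ M, x.2 ∈ I.acc x.1) {k : L} {t : S}
    (ht : t ∈ lecAsg I M k) : I.Ranks k t := by
  obtain ⟨p, hp, rfl⟩ := mem_lecAsg.mp ht
  exact ⟨p, hacc _ hp, rfl⟩

theorem card_projAsg_le (hM : I.IsMatching M) (p : P) : (projAsg M p).card ≤ I.c p :=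
  Finset.card_image_le.trans (hM.2.2.1 p)

theorem card_lecAsg_le (hM : I.IsMatching M) (k : L) : (lecAsg I M k).card ≤ I.d k :=
  Finset.card_image_le.trans (hM.2.2.2 k)

theorem sum_lec_ite_mem (huniq : ∀ s p q, (s, p) ∈ M → (s, q) ∈ M → p = q)
    (s : S) (k : L) :
    (∑ p ∈ Finset.univ.filter (fun p => I.lec p = k), if (s, p) ∈ M then (1 : ℤ) else 0) =
      if s ∈ lecAsg I M k then 1 else 0 := by
  by_cases hs : s ∈ lecAsg I M k
  · obtain ⟨q, hq, hqk⟩ := mem_lecAsg.mp hs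
    have hpart : ∀ p, (s, p) ∈ M ↔ p = q :=
      fun p => ⟨fun hp => huniq s p q hp hq, fun h => h ▸ hq⟩
    simp [hpart, hs, hqk]
  · refine (Finset.sum_eq_zero fun p hp => ?_).trans (if_neg hs).symm
    exact if_neg fun hm => hs (mem_lecAsg.mpr ⟨p, hm, (Finset.mem_filter.mp hp).2⟩)

theorem sum_sum_lec_ite_mem (huniq : ∀ s p q, (s, p) ∈ M → (s, q) ∈ M → p = q)
    (k : L) :
    (∑ s : S, ∑ p ∈ Finset.univ.filter (fun p => I.lec p = k),
      if (s, p) ∈ M then (1 : ℤ) else 0) = (lecAsg I M k).card := by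
  simp [sum_lec_ite_mem huniq]

theorem sum_acc_ite_mem_le_one (huniq : ∀ s p q, (s, p) ∈ M → (s, q) ∈ M → p = q)
    (s : S) :
    (∑ p ∈ I.acc s, if (s, p) ∈ M then (1 : ℤ) else 0) ≤ 1 := by
  rw [Finset.sum_boole, Nat.cast_le_one, Finset.card_le_one]
  intro p hp q hq
  exact huniq s p q (Finset.mem_filter.mp hp).2 (Finset.mem_filter.mp hq).2

theorem sum_sum_acc_ite_mem (hacc : ∀ x ∈ M, x.2 ∈ I.acc x.1) :
    (∑ s : S, ∑ p ∈ I.acc s, if (s, p) ∈ M then (1 : ℤ) else 0) = M.card := by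
  have hsupp : ∀ s, (∑ p ∈ I.acc s, if (s, p) ∈ M then (1 : ℤ) else 0) =
      ∑ p, if (s, p) ∈ M then (1 : ℤ) else 0 := fun s =>
    Finset.sum_subset (Finset.subset_univ _) fun p _ hp => if_neg fun hm => hp (hacc _ hm)
  rw [Finset.sum_congr rfl fun s _ => hsupp s, ← Fintype.sum_prod_type', Finset.sum_boole]
  simp

end Assignment

theorem bin_ite (A : Prop) [Decidable A] : Bin (if A then 1 else 0) := by
  unfold Bin
  split_ifs <;> simp

theorem sub_le_mul_ite_lt (n c : ℕ) : (c : ℤ) - n ≤ c * if n < c then 1 else 0 := by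
  split_ifs <;> omega

theorem one_add_sub_le_mul_ite_eq {n c : ℕ} (hn : n ≤ c) (hc : 0 < c) :
    1 + (n : ℤ) - c ≤ c * if n = c then 1 else 0 := by
  split_ifs <;> omega

theorem add_ite_add_ite_le_two {θ : ℤ} {A B : Prop} [Decidable A] [Decidable B] (hθ : θ ≤ 1)
    (h : 0 < θ → ¬(A ∧ B)) : θ + (if A then 1 else 0) + (if B then 1 else 0) ≤ 2 := by
  split_ifs <;> grind

theorem add_ite_add_ite_add_ite_le_three {θ : ℤ} {A B C : Prop} [Decidable A] [Decidable B]
    [Decidable C] (hθ : θ ≤ 1) (h : 0 < θ → ¬(A ∧ B ∧ C)) :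
    θ + (if A then 1 else 0) + (if B then 1 else 0) + (if C then 1 else 0) ≤ 3 := by
  split_ifs <;> grind

@[simps]
noncomputable def IPSol.ofMatching (I : SPAST S P L) (M : Finset (S × P)) : IPSol S P L where
  x s p := if (s, p) ∈ M then 1 else 0
  alpha p := if (projAsg M p).card < I.c p then 1 else 0
  beta k := if (lecAsg I M k).card < I.d k then 1 else 0
  eta k := if (lecAsg I M k).card = I.d k then 1 else 0
  delta s k := if ∃ t ∈ lecAsg I M k, ¬(I.lPref k t s ∧ ¬I.lPref k s t) then 1 else 0
  gamma p := if (projAsg M p).card = I.c p then 1 else 0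
  lam s p :=
    if ∃ t ∈ projAsg M p, ¬(I.lPref (I.lec p) t s ∧ ¬I.lPref (I.lec p) s t) then 1 else 0

section OfMatching

variable {I : SPAST S P L} {M : Finset (S × P)}

open IPSol

theorem ofMatching_x_nonneg (s : S) (p : P) : 0 ≤ (ofMatching I M).x s p := by
  rw [ofMatching_x]
  split_ifs <;> simp

theorem theta_ofMatching_le_one (s : S) (p : P) : theta I (ofMatching I M) s p ≤ 1 :=
  (sub_le_self _ (Finset.sum_nonneg fun q _ => ofMatching_x_nonneg s q)).trans
    (sub_le_self _ (ofMatching_x_nonneg s p))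

theorem theta_ofMatching_pos (hacc : ∀ x ∈ M, x.2 ∈ I.acc x.1) {s : S} {p : P}
    (hθ : 0 < theta I (ofMatching I M) s p) :
    (s, p) ∉ M ∧ ∀ q, (s, q) ∈ M → ¬(I.sPref s q p ∧ ¬I.sPref s p q) := by
  set better := (I.acc s).filter fun p' => I.sPref s p' p ∧ ¬I.sPref s p p'
  have hθ' : 0 < 1 - (ofMatching I M).x s p - ∑ q ∈ better, (ofMatching I M).x s q := hθ
  have hbetter :=
    Finset.sum_nonneg fun q (_ : q ∈ better) => ofMatching_x_nonneg (I := I) (M := M) s q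
  refine ⟨fun hm => ?_, fun q hq hqp => ?_⟩
  · rw [ofMatching_x, if_pos hm] at hθ'
    linarith
  · have hq_le := Finset.single_le_sum (fun q _ => ofMatching_x_nonneg (I := I) (M := M) s q)
      (Finset.mem_filter.mpr ⟨hacc _ hq, hqp⟩ : q ∈ better)
    rw [ofMatching_x, if_pos hq] at hq_le
    linarith [ofMatching_x_nonneg (I := I) (M := M) s p]

theorem theta_add_alpha_add_beta_le (h : I.SuperStable M) {s : S} {p : P} (hp : p ∈ I.acc s) :
    theta I (ofMatching I M) s p + (ofMatching I M).alpha p +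
      (ofMatching I M).beta (I.lec p) ≤ 2 := by
  rw [ofMatching_alpha, ofMatching_beta]
  refine add_ite_add_ite_le_two (theta_ofMatching_le_one s p) fun hθ hb => ?_
  obtain ⟨hnm, hpref⟩ := theta_ofMatching_pos h.1.1 hθ
  exact h.2 s p ⟨hp, hnm, hpref, Or.inl hb⟩

theorem theta_add_alpha_add_eta_add_delta_le (h : I.SuperStable M) {s : S} {p : P}
    (hp : p ∈ I.acc s) :
    theta I (ofMatching I M) s p + (ofMatching I M).alpha p + (ofMatching I M).eta (I.lec p) +
      (ofMatching I M).delta s (I.lec p) ≤ 3 := by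
  rw [ofMatching_alpha, ofMatching_eta, ofMatching_delta]
  refine add_ite_add_ite_add_ite_le_three (theta_ofMatching_le_one s p)
    fun hθ ⟨hα, hη, t, ht, hts⟩ => ?_
  obtain ⟨hnm, hpref⟩ := theta_ofMatching_pos h.1.1 hθ
  obtain ⟨w, hw, hsw⟩ :=
    I.exists_worstIn_lPref _ (fun _ => ranks_of_mem_lecAsg h.1.1) ⟨p, hp, rfl⟩ ht hts
  exact h.2 s p ⟨hp, hnm, hpref, Or.inr (Or.inl ⟨hα, hη, Or.inr ⟨w, hw, hsw⟩⟩)⟩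

theorem theta_add_gamma_add_lam_le (h : I.SuperStable M) {s : S} {p : P} (hp : p ∈ I.acc s) :
    theta I (ofMatching I M) s p + (ofMatching I M).gamma p + (ofMatching I M).lam s p ≤ 2 := by
  rw [ofMatching_gamma, ofMatching_lam]
  refine add_ite_add_ite_le_two (theta_ofMatching_le_one s p) fun hθ ⟨hγ, t, ht, hts⟩ => ?_
  obtain ⟨hnm, hpref⟩ := theta_ofMatching_pos h.1.1 hθ
  obtain ⟨w, hw, hsw⟩ :=
    I.exists_worstIn_lPref _ (fun _ => ranks_of_mem_projAsg h.1.1) ⟨p, hp, rfl⟩ ht hts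
  exact h.2 s p ⟨hp, hnm, hpref, Or.inr (Or.inr ⟨hγ, w, hw, hsw⟩)⟩

theorem delta_constraint (hM : I.IsMatching M) (s : S) (k : L) :
    (I.d k : ℤ) * (ofMatching I M).delta s k ≥
      (∑ s' : S, ∑ p ∈ Finset.univ.filter (fun p => I.lec p = k), (ofMatching I M).x s' p) -
      ∑ s' ∈ Finset.univ.filter (fun s' : S =>
          (∃ q ∈ I.acc s', I.lec q = k) ∧ I.lPref k s' s ∧ ¬I.lPref k s s'),
        ∑ p ∈ Finset.univ.filter (fun p => I.lec p = k), (ofMatching I M).x s' p := by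
  rw [ofMatching_delta]
  split_ifs with hδ
  · refine (sub_le_self _ (Finset.sum_nonneg fun s' _ => Finset.sum_nonneg fun q _ =>
      ofMatching_x_nonneg s' q)).trans ?_
    simp only [ofMatching_x]
    rw [sum_sum_lec_ite_mem hM.2.1, mul_one]
    exact_mod_cast card_lecAsg_le hM k
  · push Not at hδ
    rw [Finset.sum_filter_of_ne fun s' _ hne => ?_, sub_self, mul_zero]
    have hs' : s' ∈ lecAsg I M k := by
      by_contra hn
      simp only [ofMatching_x] at hne
      rw [sum_lec_ite_mem hM.2.1, if_neg hn] at hne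
      exact hne rfl
    exact ⟨ranks_of_mem_lecAsg hM.1 hs', hδ s' hs'⟩

theorem lam_constraint (hM : I.IsMatching M) {s : S} {p : P} :
    (I.c p : ℤ) * (ofMatching I M).lam s p ≥
      (∑ s' : S, (ofMatching I M).x s' p) -
      ∑ s' ∈ Finset.univ.filter (fun s' : S =>
          p ∈ I.acc s' ∧ I.lPref (I.lec p) s' s ∧ ¬I.lPref (I.lec p) s s'),
        (ofMatching I M).x s' p := by
  rw [ofMatching_lam]
  split_ifs with hlam
  · refine (sub_le_self _ (Finset.sum_nonneg fun s' _ => ofMatching_x_nonneg s' p)).trans ?_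
    simp only [ofMatching_x]
    rw [sum_ite_mem_eq_card_projAsg, mul_one]
    exact_mod_cast card_projAsg_le hM p
  · push Not at hlam
    rw [Finset.sum_filter_of_ne fun s' _ hne => ?_, sub_self, mul_zero]
    have hs' : s' ∈ projAsg M p := mem_projAsg.mpr (by_contra fun hn => hne (if_neg hn))
    exact ⟨hM.1 _ (mem_projAsg.mp hs'), hlam s' hs'⟩

theorem feasible_ofMatching (h : I.SuperStable M) : Feasible I (ofMatching I M) := by
  have hM : I.IsMatching M := h.1
  have hproj : ∀ p, ∑ s, (ofMatching I M).x s p = (projAsg M p).card :=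
    sum_ite_mem_eq_card_projAsg M
  have hlec : ∀ k, ∑ s, ∑ p ∈ Finset.univ.filter (fun p => I.lec p = k),
      (ofMatching I M).x s p = (lecAsg I M k).card :=
    sum_sum_lec_ite_mem hM.2.1
  refine ⟨fun _ _ => bin_ite _, fun _ => bin_ite _, fun _ => bin_ite _, fun _ => bin_ite _,
    fun _ _ => bin_ite _, fun _ => bin_ite _, fun _ _ _ => bin_ite _,
    fun s p hp => if_neg fun hm => hp (hM.1 _ hm), sum_acc_ite_mem_le_one hM.2.1,
    fun p => ?_, fun k => ?_, fun p => ?_, fun k => ?_,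
    fun _ _ hp => theta_add_alpha_add_beta_le h hp, fun k => ?_, delta_constraint hM,
    fun _ _ hp => theta_add_alpha_add_eta_add_delta_le h hp, fun p => ?_,
    fun _ _ _ => lam_constraint hM, fun _ _ hp => theta_add_gamma_add_lam_le h hp⟩
  · rw [hproj]; exact_mod_cast card_projAsg_le hM p
  · rw [hlec]; exact_mod_cast card_lecAsg_le hM k
  · rw [hproj]; exact sub_le_mul_ite_lt _ _
  · rw [hlec]; exact sub_le_mul_ite_lt _ _
  · rw [hlec]; exact one_add_sub_le_mul_ite_eq (card_lecAsg_le hM k) (I.dpos k)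
  · rw [hproj]; exact one_add_sub_le_mul_ite_eq (card_projAsg_le hM p) (I.cpos p)

end OfMatching

end SPAST

open SPAST in
theorem super_stable_gives_feasible_solution {S P L : Type} [Fintype S] [Fintype P] [Fintype L]
    [DecidableEq S] [DecidableEq P] [DecidableEq L]
    (I : SPAST S P L) (M : Finset (S × P)) (h : SuperStable I M) :
    ∃ sol : IPSol S P L, Feasible I sol ∧
      (∀ (s : S) (p : P), sol.x s p = 1 ↔ (s, p) ∈ M) ∧
      (∑ s : S, ∑ p ∈ I.acc s, sol.x s p) = (M.card : ℤ) :=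
  ⟨IPSol.ofMatching I M, feasible_ofMatching h, fun s p => by simp [IPSol.ofMatching_x],
    sum_sum_acc_ite_mem h.1.1⟩
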